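/- arXiv:2312.04973 — 2 statements merged into one kernel-verified Lean document; each statement's English description precedes it below -/
import Mathlib

section
/- Let u be an n×n real matrix (rows indexed by actions a_1,…,a_n, columns by states θ_1,…,θ_n) that is upper-triangular (u(i,k)=0 for i>k), nonnegative, with strictly positive diagonal (u(k,k)>0), and whose nonzero column entries are nondecreasing in the action index: u(i,k) ≤ u(j,k) whenever i < j ≤ k. Then for every nonempty subset S ⊆ {1,…,n} there exists a probability vector μ supported on {θ_k : k∈S} such that the receiver's expected utility Σ_k u(i,θ_k)·μ(θ_k) is the same for all actions a_i with i∈S. -/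
/-!
Induct on `S`, adding its least element `a` to a smaller set `s` on which a belief `μ` makes
all actions of `s` indifferent, with common value `c`. Mixing `μ` with the point mass at `θ_a`
keeps the actions of `s` indifferent, because upper triangularity makes them pay nothing at
`θ_a`. By column monotonicity `a_a` earns at most `c` under `μ`, and it gains `u a a > 0` at
`θ_a`, so a suitable weight on `θ_a` makes `a_a` indifferent as well.
-/

open Finset

variable {ι : Type*} [Fintype ι]

structure IsBeliefOn (s : Finset ι) (μ : ι → ℝ) : Prop where
  nonneg : ∀ k, 0 ≤ μ k
  sum_eq_one : ∑ k, μ k = 1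
  eq_zero_of_notMem : ∀ k ∉ s, μ k = 0

def expectedUtility (u : ι → ι → ℝ) (μ : ι → ℝ) (i : ι) : ℝ := ∑ k, u i k * μ k

namespace IsBeliefOn

theorem single [DecidableEq ι] (a : ι) : IsBeliefOn {a} (Pi.single a 1 : ι → ℝ) where
  nonneg k := by
    rw [Pi.single_apply]
    split_ifs <;> norm_num
  sum_eq_one := by simp
  eq_zero_of_notMem k hk := Pi.single_eq_of_ne (by simpa using hk) 1

theorem mix [DecidableEq ι] {s : Finset ι} {μ : ι → ℝ} (hμ : IsBeliefOn s μ) (a : ι) {t : ℝ}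
    (ht : t ∈ Set.Icc (0 : ℝ) 1) :
    IsBeliefOn (insert a s) ((Pi.single a t : ι → ℝ) + (1 - t) • μ) where
  nonneg k := by
    have hsingle : 0 ≤ (Pi.single a t : ι → ℝ) k := by
      rw [Pi.single_apply]
      split_ifs
      exacts [ht.1, le_rfl]
    exact add_nonneg hsingle (mul_nonneg (sub_nonneg.2 ht.2) (hμ.nonneg k))
  sum_eq_one := by
    simp only [Pi.add_apply, Pi.smul_apply, smul_eq_mul, sum_add_distrib, ← mul_sum,
      hμ.sum_eq_one]
    simp
  eq_zero_of_notMem k hk := by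
    rw [mem_insert, not_or] at hk
    simp [Pi.single_eq_of_ne hk.1, hμ.eq_zero_of_notMem k hk.2]

end IsBeliefOn

theorem expectedUtility_single [DecidableEq ι] (u : ι → ι → ℝ) (a i : ι) :
    expectedUtility u (Pi.single a 1 : ι → ℝ) i = u i a := by
  simp [expectedUtility, Pi.single_apply]

theorem expectedUtility_mix [DecidableEq ι] (u : ι → ι → ℝ) (μ : ι → ℝ) (a i : ι) (t : ℝ) :
    expectedUtility u ((Pi.single a t : ι → ℝ) + (1 - t) • μ) i =
      t * u i a + (1 - t) * expectedUtility u μ i := by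
  simp only [expectedUtility, Pi.add_apply, Pi.smul_apply, smul_eq_mul, mul_add,
    sum_add_distrib, mul_left_comm _ (1 - t), ← mul_sum, Pi.single_apply, mul_ite, mul_zero,
    sum_ite_eq', mem_univ, if_true]
  ring

theorem IsBeliefOn.expectedUtility_le {s : Finset ι} {μ : ι → ℝ} (hμ : IsBeliefOn s μ)
    {u : ι → ι → ℝ} {i j : ι} (h : ∀ k ∈ s, u i k ≤ u j k) :
    expectedUtility u μ i ≤ expectedUtility u μ j := by
  refine sum_le_sum fun k _ => ?_
  by_cases hk : k ∈ s
  · exact mul_le_mul_of_nonneg_right (h k hk) (hμ.nonneg k)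
  · simp [hμ.eq_zero_of_notMem k hk]

theorem exists_mem_Icc_mul_add_eq {p A c : ℝ} (hp : 0 < p) (hAc : A ≤ c) :
    ∃ t ∈ Set.Icc (0 : ℝ) 1, t * p + (1 - t) * A = (1 - t) * c := by
  have hD : 0 < p + (c - A) := by linarith
  refine ⟨(c - A) / (p + (c - A)), ⟨by positivity, (div_le_one hD).2 (by linarith)⟩, ?_⟩
  field_simp
  ring

theorem exists_indifferent_insert [DecidableEq ι] {u : ι → ι → ℝ} {s : Finset ι} {μ : ι → ℝ} {c : ℝ} {a j : ι}
    (hμ : IsBeliefOn s μ) (hc : ∀ i ∈ s, expectedUtility u μ i = c) (ha : 0 < u a a)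
    (hzero : ∀ i ∈ s, u i a = 0) (hj : j ∈ s) (hle : ∀ k ∈ s, u a k ≤ u j k) :
    ∃ ν, IsBeliefOn (insert a s) ν ∧ ∃ c', ∀ i ∈ insert a s, expectedUtility u ν i = c' := by
  have hAc : expectedUtility u μ a ≤ c := hc j hj ▸ hμ.expectedUtility_le hle
  obtain ⟨t, ht, hta⟩ := exists_mem_Icc_mul_add_eq ha hAc
  refine ⟨_, hμ.mix a ht, (1 - t) * c, fun i hi => ?_⟩
  rw [expectedUtility_mix]
  rcases mem_insert.1 hi with rfl | hi
  · exact hta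
  · rw [hzero i hi, hc i hi]
    ring

theorem exists_indifferent_belief_of_triangular [LinearOrder ι] (u : ι → ι → ℝ)
    (h_upper : ∀ i k, k < i → u i k = 0) (h_diag : ∀ k, 0 < u k k)
    (h_mono : ∀ i j k, i < j → j ≤ k → u i k ≤ u j k) (S : Finset ι) (hS : S.Nonempty) :
    ∃ μ, IsBeliefOn S μ ∧ ∃ c, ∀ i ∈ S, expectedUtility u μ i = c := by
  induction S using Finset.induction_on_min with
  | empty => exact absurd hS not_nonempty_empty
  | insert a s ha ih =>
    rcases s.eq_empty_or_nonempty with rfl | hs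
    · exact ⟨_, IsBeliefOn.single a, u a a, by simp [expectedUtility_single]⟩
    obtain ⟨μ, hμ, c, hc⟩ := ih hs
    exact exists_indifferent_insert hμ hc (h_diag a) (fun i hi => h_upper i a (ha i hi))
      (s.min'_mem hs) fun k hk => h_mono a _ k (ha _ (s.min'_mem hs)) (s.min'_le k hk)

open Finset in
theorem exists_indifferent_belief_general (n : ℕ) (u : Fin n → Fin n → ℝ)
    (h_upper : ∀ i k : Fin n, k < i → u i k = 0)
    (h_diag : ∀ k : Fin n, 0 < u k k)
    (h_mono : ∀ i j k : Fin n, i < j → j ≤ k → u i k ≤ u j k) :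
    ∀ S : Finset (Fin n), S.Nonempty →
      ∃ μ : Fin n → ℝ, (∀ k, 0 ≤ μ k) ∧ (∑ k, μ k = 1) ∧
        (∀ k ∉ S, μ k = 0) ∧
        ∃ c : ℝ, ∀ i ∈ S, ∑ k, u i k * μ k = c := by
  intro S hS
  obtain ⟨μ, hμ, c, hc⟩ := exists_indifferent_belief_of_triangular u h_upper h_diag h_mono S hS
  exact ⟨μ, hμ.nonneg, hμ.sum_eq_one, hμ.eq_zero_of_notMem, c, hc⟩

open Finset in
/-- for an upper-triangular, nonnegative receiver utility matrix with strictly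
positive diagonal whose nonzero column entries are nondecreasing in the action index, for
every nonempty subset `S` of actions there is a belief supported on the corresponding states
under which the receiver is indifferent among all actions in `S`. -/
theorem exists_indifferent_belief (n : ℕ) (u : Fin n → Fin n → ℝ)
    (h_upper : ∀ i k : Fin n, k < i → u i k = 0)
    (h_nonneg : ∀ i k : Fin n, 0 ≤ u i k)
    (h_diag : ∀ k : Fin n, 0 < u k k)
    (h_mono : ∀ i j k : Fin n, i < j → j ≤ k → u i k ≤ u j k) :
    ∀ S : Finset (Fin n), S.Nonempty →
      ∃ μ : Fin n → ℝ, (∀ k, 0 ≤ μ k) ∧ (∑ k, μ k = 1) ∧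
        (∀ k ∉ S, μ k = 0) ∧
        ∃ c : ℝ, ∀ i ∈ S, ∑ k, u i k * μ k = c :=
  exists_indifferent_belief_general n u h_upper h_diag h_mono
end

section
/- In the credence goods market with u(a_i,θ_j) = c − p_i − l·1[i<j], p_1 < … < p_n, l > 0, and c > p_n + l, the receiver utility is weakly logarithmically supermodular: for all 1 ≤ i < j ≤ n and all k < n with j ≠ k, u(a_i,θ_k)·u(a_j,θ_{k+1}) ≥ u(a_j,θ_k)·u(a_i,θ_{k+1}). -/
/-! Passing from state `θ_k` to `θ_{k+1}` changes the utility of action `a_i` only when `i = k`,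
where the loss `l` switches on. So for `j ≠ k` the row of `a_j` is constant across the two
states, while the row of `a_i` can only drop by `l`; as `u(a_j, θ_k) > 0`, the inequality follows. -/

def credenceUtility {m : ℕ} (p : Fin m → ℝ) (l c : ℝ) (i j : Fin m) : ℝ :=
  c - p i - if i < j then l else 0

namespace credenceUtility

variable {m : ℕ} (p : Fin m → ℝ) (l c : ℝ)

theorem mk_succ (i k : Fin m) (hk : (k : ℕ) + 1 < m) :
    credenceUtility p l c i ⟨k + 1, hk⟩ = credenceUtility p l c i k - if i = k then l else 0 := by
  have lt_succ : i < ⟨k + 1, hk⟩ ↔ i < k ∨ i = k := by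
    rw [Fin.lt_def, Fin.lt_def, Fin.ext_iff]
    exact Nat.lt_succ_iff_lt_or_eq
  unfold credenceUtility
  simp only [lt_succ]
  by_cases hik : i < k
  · simp [hik, hik.ne]
  · simp only [hik, false_or, if_false, sub_zero]

variable {p l c}

theorem pos (hl : 0 ≤ l) {j : Fin m} (hc : p j + l < c) (k : Fin m) :
    0 < credenceUtility p l c j k := by
  unfold credenceUtility
  split_ifs <;> linarith

theorem mul_mk_succ_le (hl : 0 ≤ l) (i : Fin m) {j k : Fin m} (hc : p j + l < c)
    (hjk : j ≠ k) (hk : (k : ℕ) + 1 < m) :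
    credenceUtility p l c j k * credenceUtility p l c i ⟨k + 1, hk⟩ ≤
      credenceUtility p l c i k * credenceUtility p l c j ⟨k + 1, hk⟩ := by
  set d : ℝ := if i = k then l else 0
  have hd : 0 ≤ d := by positivity
  rw [mk_succ, mk_succ, if_neg hjk, sub_zero]
  calc credenceUtility p l c j k * (credenceUtility p l c i k - d)
      = credenceUtility p l c i k * credenceUtility p l c j k
          - credenceUtility p l c j k * d := by ring
    _ ≤ credenceUtility p l c i k * credenceUtility p l c j k :=
        sub_le_self _ (mul_nonneg (pos hl hc k).le hd)

end credenceUtility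

/-- in the credence goods market, the receiver's utility
`u(a_i,θ_j) = c − p_i − l·1[i<j]` is weakly logarithmically supermodular:
`u(a_i,θ_k)·u(a_j,θ_{k+1}) ≥ u(a_j,θ_k)·u(a_i,θ_{k+1})` for all `i < j` and `k < n`
with `j ≠ k`. -/
theorem credence_goods_weakly_log_supermodular (n : ℕ)
    (p : Fin (n + 1) → ℝ) (hp : StrictMono p)
    (l c : ℝ) (hl : 0 < l) (hc : p (Fin.last n) + l < c)
    (u : Fin (n + 1) → Fin (n + 1) → ℝ)
    (hu : ∀ i j : Fin (n + 1), u i j = c - p i - if i < j then l else 0) :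
    ∀ (i j k : Fin (n + 1)) (hk : (k : ℕ) + 1 ≤ n), i < j → j ≠ k →
      u j k * u i ⟨(k : ℕ) + 1, Nat.lt_succ_of_le hk⟩ ≤
        u i k * u j ⟨(k : ℕ) + 1, Nat.lt_succ_of_le hk⟩ := by
  intro i j k hk _ hjk
  obtain rfl : u = credenceUtility p l c := funext₂ hu
  have hcj : p j + l < c := by linarith [hp.monotone (Fin.le_last j)]
  exact credenceUtility.mul_mk_succ_le hl.le i hcj hjk _
end
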